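/- Upper bound via positive utility: for any itemset X, u(X) ≤ pu(X), and pu itself need not be anti-monotone in general, but pu(X) ≤ SUM(X.pu) + SUM(X.rpu) when all items of X are counted, where rpu counts positive utilities of items succeeding X; in particular u(X) ≤ SUM(X.pu) + SUM(X.rpu). -/

import Mathlib

open Finset

def utilT {α ι : Type} (pr : α → ℤ) (q : α → ι → ℕ) (X : Finset α) (t : ι) : ℤ :=
  ∑ i ∈ X, pr i * (q i t : ℤ)

def totU {α ι : Type} [DecidableEq α] (D : Finset ι) (Trans : ι → Finset α)
    (pr : α → ℤ) (q : α → ι → ℕ) (X : Finset α) : ℤ :=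
  ∑ t ∈ D.filter (fun t => X ⊆ Trans t), utilT pr q X t

def puT {α ι : Type} [DecidableEq α] (pr : α → ℤ) (q : α → ι → ℕ) (Z : Finset α) (t : ι) : ℤ :=
  ∑ i ∈ Z.filter (fun i => 0 < pr i), pr i * (q i t : ℤ)

def rpuT {α ι : Type} [DecidableEq α] [LinearOrder α] (Trans : ι → Finset α)
    (pr : α → ℤ) (q : α → ι → ℕ) (Z : Finset α) (t : ι) : ℤ :=
  ∑ i ∈ (Trans t).filter (fun i => (∀ x ∈ Z, x < i) ∧ 0 < pr i), pr i * (q i t : ℤ)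

def SUMpu {α ι : Type} [DecidableEq α] (D : Finset ι) (Trans : ι → Finset α)
    (pr : α → ℤ) (q : α → ι → ℕ) (Z : Finset α) : ℤ :=
  ∑ t ∈ D.filter (fun t => Z ⊆ Trans t), puT pr q Z t

def SUMrpu {α ι : Type} [DecidableEq α] [LinearOrder α] (D : Finset ι) (Trans : ι → Finset α)
    (pr : α → ℤ) (q : α → ι → ℕ) (Z : Finset α) : ℤ :=
  ∑ t ∈ D.filter (fun t => Z ⊆ Trans t), rpuT Trans pr q Z t

theorem utilT_le_puT {α ι : Type} [DecidableEq α] (pr : α → ℤ) (q : α → ι → ℕ)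
    (X : Finset α) (t : ι) : utilT pr q X t ≤ puT pr q X t :=
  sum_le_sum_of_subset_of_nonpos' (filter_subset _ _) fun _ hiX hi =>
    mul_nonpos_of_nonpos_of_nonneg (not_lt.mp fun hpos => hi (mem_filter.mpr ⟨hiX, hpos⟩))
      (Int.natCast_nonneg _)

theorem totU_le_SUMpu {α ι : Type} [DecidableEq α] (D : Finset ι) (Trans : ι → Finset α)
    (pr : α → ℤ) (q : α → ι → ℕ) (X : Finset α) :
    totU D Trans pr q X ≤ SUMpu D Trans pr q X :=
  sum_le_sum fun t _ => utilT_le_puT pr q X t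

theorem rpuT_nonneg {α ι : Type} [DecidableEq α] [LinearOrder α] (Trans : ι → Finset α)
    (pr : α → ℤ) (q : α → ι → ℕ) (Z : Finset α) (t : ι) : 0 ≤ rpuT Trans pr q Z t :=
  sum_nonneg fun _ hi => mul_nonneg (mem_filter.mp hi).2.2.le (Int.natCast_nonneg _)

theorem SUMrpu_nonneg {α ι : Type} [DecidableEq α] [LinearOrder α] (D : Finset ι)
    (Trans : ι → Finset α) (pr : α → ℤ) (q : α → ι → ℕ) (Z : Finset α) :
    0 ≤ SUMrpu D Trans pr q Z :=
  sum_nonneg fun t _ => rpuT_nonneg Trans pr q Z t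

theorem stmt17_general {α ι : Type} [DecidableEq α] [LinearOrder α] (D : Finset ι)
    (Trans : ι → Finset α) (pr : α → ℤ) (q : α → ι → ℕ)
    (X : Finset α) :
    totU D Trans pr q X ≤ SUMpu D Trans pr q X + SUMrpu D Trans pr q X :=
  le_add_of_le_of_nonneg (totU_le_SUMpu D Trans pr q X) (SUMrpu_nonneg D Trans pr q X)

/-- The utility of `X` is bounded by `SUM(X.pu) + SUM(X.rpu)`. -/
theorem stmt17 {α ι : Type} [DecidableEq α] [LinearOrder α] (D : Finset ι)
    (Trans : ι → Finset α) (pr : α → ℤ) (q : α → ι → ℕ)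
    (hq : ∀ i t, 0 < q i t) (X : Finset α) :
    totU D Trans pr q X ≤ SUMpu D Trans pr q X + SUMrpu D Trans pr q X :=
  stmt17_general D Trans pr q X
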